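/- For distributions on Fin n with ground distance d_{ij} = |i − j|, the earth mover's distance equals the L1 distance between cumulative distribution functions: EMD(p, q) = ∑_{k=0}^{n−1} |P_k − Q_k|, where P_k = ∑_{i ≤ k} p_i and Q_k = ∑_{i ≤ k} q_i. -/

import Mathlib

open Finset

section EMDaux

lemma clampA {a b u v : ℝ} (hb : b ≤ a) (huv : u ≤ v) :
    max 0 (min a v - max b u) = max b (min a v) - max b (min a u) := by
  rcases le_total v a with h1 | h1 <;> rcases le_total u a with h2 | h2 <;>
    rcases le_total v b with h3 | h3 <;> rcases le_total u b with h4 | h4 <;>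
    simp [max_def, min_def] <;> split_ifs <;> linarith

lemma clampB {c u v : ℝ} (huv : u ≤ v) :
    max u (min v c) - u = min v c - min u c := by
  rcases le_total c u with h | h <;> rcases le_total c v with h2 | h2 <;>
    simp [max_def, min_def] <;> split_ifs <;> linarith

lemma tele (a b : ℝ) (g : ℕ → ℝ) (m : ℕ) (hb : b ≤ a) (hg : ∀ j, g j ≤ g (j + 1)) :
    ∑ j ∈ range m, max 0 (min a (g (j + 1)) - max b (g j)) =
      max b (min a (g m)) - max b (min a (g 0)) := by
  rw [← Finset.sum_range_sub (fun j => max b (min a (g j))) m]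
  exact Finset.sum_congr rfl fun j _ => clampA hb (hg j)

lemma filt_range {n : ℕ} (g : ℕ → ℝ) (k : Fin n) :
    ∑ i ∈ univ.filter (fun i : Fin n => i ≤ k), g i = ∑ i ∈ range (k + 1), g i := by
  rw [Finset.sum_filter]
  simp only [Fin.le_def]
  rw [Fin.sum_univ_eq_sum_range (fun m => if m ≤ (k : ℕ) then g m else 0)]
  rw [show ∑ m ∈ range n, (if m ≤ (k : ℕ) then g m else 0)
      = ∑ m ∈ range (k + 1), (if m ≤ (k : ℕ) then g m else 0) from
    (Finset.sum_subset (Finset.range_subset_range.2 k.isLt) (fun x _ hx => by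
      rw [if_neg]; simp only [Finset.mem_range] at hx; omega)).symm]
  exact Finset.sum_congr rfl fun m hm => if_pos (by simp only [Finset.mem_range] at hm; omega)

noncomputable def XX : ℕ → ℕ → ℝ := fun i k => if i ≤ k then 1 else 0

lemma sumX {n i : ℕ} (h : i ≤ n) : ∑ k ∈ range n, XX i k = (n : ℝ) - i := by
  unfold XX
  rw [Finset.sum_boole]
  have : (range n).filter (fun k => i ≤ k) = Finset.Ico i n := by
    ext x; simp [Finset.mem_Ico, and_comm]
  rw [this, Nat.card_Ico]
  push_cast [h]
  ring

lemma dist_aux {n : ℕ} {i j : ℕ} (hi : i ≤ n) (hj : j ≤ n) (hij : i ≤ j) :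
    |(i : ℝ) - (j : ℝ)| = ∑ k ∈ range n, |XX i k - XX j k| := by
  have h1 : ∀ k, |XX i k - XX j k| = XX i k - XX j k := by
    intro k; unfold XX; split_ifs <;> simp <;> omega
  rw [abs_of_nonpos (by linarith [(Nat.cast_le (α := ℝ)).2 hij])]
  simp only [h1]
  rw [Finset.sum_sub_distrib, sumX hi, sumX hj]
  ring

lemma dist_eq {n : ℕ} (i j : Fin n) :
    |((i : ℕ) : ℝ) - ((j : ℕ) : ℝ)| = ∑ k : Fin n, |XX i k - XX j k| := by
  rw [Fin.sum_univ_eq_sum_range (fun k => |XX i k - XX j k|)]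
  rcases le_total (i : ℕ) (j : ℕ) with h | h
  · exact dist_aux i.isLt.le j.isLt.le h
  · rw [abs_sub_comm, dist_aux j.isLt.le i.isLt.le h]
    exact Finset.sum_congr rfl fun k _ => abs_sub_comm _ _

noncomputable def cext {n : ℕ} (p : Fin n → ℝ) : ℕ → ℝ :=
  fun m => if h : m < n then p ⟨m, h⟩ else 0

noncomputable def ccum {n : ℕ} (p : Fin n → ℝ) : ℕ → ℝ :=
  fun m => ∑ i ∈ range m, cext p i

lemma cext_nonneg {n : ℕ} {p : Fin n → ℝ} (hp : ∀ i, 0 ≤ p i) (m : ℕ) : 0 ≤ cext p m := by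
  unfold cext; split_ifs with h
  · exact hp _
  · exact le_refl 0

lemma ccum_step {n : ℕ} (p : Fin n → ℝ) (m : ℕ) :
    ccum p (m + 1) = ccum p m + cext p m := Finset.sum_range_succ _ _

lemma ccum_mono {n : ℕ} {p : Fin n → ℝ} (hp : ∀ i, 0 ≤ p i) {a b : ℕ} (h : a ≤ b) :
    ccum p a ≤ ccum p b := by
  unfold ccum
  exact Finset.sum_le_sum_of_subset_of_nonneg (Finset.range_subset_range.2 h)
    (fun i _ _ => cext_nonneg hp i)

lemma ccum_zero {n : ℕ} (p : Fin n → ℝ) : ccum p 0 = 0 := rfl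

lemma ccum_top {n : ℕ} {p : Fin n → ℝ} (hp1 : ∑ i, p i = 1) : ccum p n = 1 := by
  unfold ccum
  rw [← Fin.sum_univ_eq_sum_range (fun m => cext p m) n, ← hp1]
  exact Finset.sum_congr rfl fun i _ => by simp [cext, i.isLt]

lemma ccum_nonneg {n : ℕ} {p : Fin n → ℝ} (hp : ∀ i, 0 ≤ p i) (m : ℕ) : 0 ≤ ccum p m :=
  ccum_zero p ▸ ccum_mono hp (Nat.zero_le m)

lemma ccum_le_one {n : ℕ} {p : Fin n → ℝ} (hp : ∀ i, 0 ≤ p i) (hp1 : ∑ i, p i = 1)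
    {m : ℕ} (hm : m ≤ n) : ccum p m ≤ 1 :=
  ccum_top hp1 ▸ ccum_mono hp hm

lemma ccum_step_le {n : ℕ} {p : Fin n → ℝ} (hp : ∀ i, 0 ≤ p i) (m : ℕ) :
    ccum p m ≤ ccum p (m + 1) := ccum_mono hp (Nat.le_succ m)

lemma filt_cum {n : ℕ} (p : Fin n → ℝ) (k : Fin n) :
    ∑ i ∈ univ.filter (fun i : Fin n => i ≤ k), p i = ccum p (k + 1) := by
  rw [show ccum p ((k : ℕ) + 1) = ∑ i ∈ range ((k : ℕ) + 1), cext p i from rfl,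
    ← filt_range (cext p) k]
  exact Finset.sum_congr rfl fun i _ => by simp [cext, i.isLt]

/-- Row sums of the monotone (quantile) coupling. -/
lemma rowsum {n : ℕ} (p q : Fin n → ℝ) (hp : ∀ i, 0 ≤ p i) (hp1 : ∑ i, p i = 1)
    (hq : ∀ i, 0 ≤ q i) (hq1 : ∑ i, q i = 1) (i : Fin n) :
    ∑ j : Fin n,
      max 0 (min (ccum p (i + 1)) (ccum q (j + 1)) - max (ccum p i) (ccum q j)) = p i := by
  set a := ccum p ((i : ℕ) + 1) with ha
  set b := ccum p (i : ℕ) with hbdef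
  have hb : b ≤ a := ccum_step_le hp i
  rw [Fin.sum_univ_eq_sum_range (fun m => max 0 (min a (ccum q (m + 1)) - max b (ccum q m))) n]
  rw [tele a b (ccum q) n hb (ccum_step_le hq)]
  rw [ccum_top hq1, ccum_zero]
  have h0b : 0 ≤ b := ccum_nonneg hp _
  have ha1 : a ≤ 1 := ccum_le_one hp hp1 i.isLt
  rw [min_eq_left ha1, max_eq_right hb, min_eq_right (le_trans h0b hb), max_eq_left h0b]
  rw [ha, ccum_step]
  simp [cext, i.isLt, hbdef]

lemma ck_eq {n : ℕ} {p q : Fin n → ℝ} (hp : ∀ i, 0 ≤ p i) (hq : ∀ i, 0 ≤ q i) (m : ℕ) :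
    ∑ i ∈ range m, ∑ j ∈ range m,
      max 0 (min (ccum p (i + 1)) (ccum q (j + 1)) - max (ccum p i) (ccum q j))
    = min (ccum p m) (ccum q m) := by
  set c := ccum q m with hc
  have hinner : ∀ i : ℕ, ∑ j ∈ range m,
      max 0 (min (ccum p (i + 1)) (ccum q (j + 1)) - max (ccum p i) (ccum q j))
      = min (ccum p (i + 1)) c - min (ccum p i) c := by
    intro i
    rw [tele _ _ (ccum q) m (ccum_step_le hp i) (ccum_step_le hq), ccum_zero,
      min_eq_right (ccum_nonneg hp _), max_eq_left (ccum_nonneg hp _), ← hc,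
      clampB (ccum_step_le hp i)]
  rw [Finset.sum_congr rfl fun i _ => hinner i,
    Finset.sum_range_sub (fun m => min (ccum p m) c) m, ccum_zero,
    min_eq_left (ccum_nonneg hq _), sub_zero]

end EMDaux

/-- `f` is a feasible flow from `p` to `q`. -/
def FeasibleFlow {n : ℕ} (p q : Fin n → ℝ) (f : Fin n → Fin n → ℝ) : Prop :=
  (∀ i j, 0 ≤ f i j) ∧ (∀ i, ∑ j, f i j = p i) ∧ (∀ j, ∑ i, f i j = q j)

/-- Earth mover's distance: minimum transport cost over feasible flows. -/
noncomputable def EMD {n : ℕ} (d : Fin n → Fin n → ℝ) (p q : Fin n → ℝ) : ℝ :=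
  sInf {c | ∃ f, FeasibleFlow p q f ∧ c = ∑ i, ∑ j, f i j * d i j}

/-- For the ground distance `|i - j|` on `Fin n`, the EMD equals the L1 distance
between the cumulative distribution functions. -/
theorem emd_eq_cdf_l1 {n : ℕ} (p q : Fin n → ℝ)
    (hp : ∀ i, 0 ≤ p i) (hp1 : ∑ i, p i = 1)
    (hq : ∀ i, 0 ≤ q i) (hq1 : ∑ i, q i = 1) :
    EMD (fun i j => |((i : ℕ) : ℝ) - ((j : ℕ) : ℝ)|) p q =
      ∑ k : Fin n,
        |(∑ i ∈ univ.filter (fun i => i ≤ k), p i) -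
          ∑ i ∈ univ.filter (fun i => i ≤ k), q i| := by
  classical
  set P := ccum p with hP
  set Q := ccum q with hQ
  set T := ∑ k : Fin n, |P ((k : ℕ) + 1) - Q ((k : ℕ) + 1)| with hT
  have hgoalT : (∑ k : Fin n,
      |(∑ i ∈ univ.filter (fun i => i ≤ k), p i) -
        ∑ i ∈ univ.filter (fun i => i ≤ k), q i|) = T :=
    Finset.sum_congr rfl fun k _ => by rw [filt_cum, filt_cum]
  rw [hgoalT]
  -- the coupling
  set F : Fin n → Fin n → ℝ :=
    fun i j => max 0 (min (P ((i : ℕ) + 1)) (Q ((j : ℕ) + 1)) - max (P (i : ℕ)) (Q (j : ℕ)))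
    with hFdef
  have hFfeas : FeasibleFlow p q F := by
    refine ⟨fun i j => le_max_left _ _, fun i => rowsum p q hp hp1 hq hq1 i, fun j => ?_⟩
    rw [Finset.sum_congr rfl fun i (_ : i ∈ univ) =>
      (by rw [min_comm (Q ((j : ℕ) + 1)) (P ((i : ℕ) + 1)), max_comm (Q (j : ℕ)) (P (i : ℕ))] :
        F i j = max 0 (min (Q ((j : ℕ) + 1)) (P ((i : ℕ) + 1)) - max (Q (j : ℕ)) (P (i : ℕ))))]
    exact rowsum q p hq hq1 hp hp1 j
  -- marginal identities
  have hmargP : ∀ f : Fin n → Fin n → ℝ, (∀ i, ∑ j, f i j = p i) → ∀ k : Fin n,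
      ∑ i, ∑ j, f i j * XX i k = P ((k : ℕ) + 1) := by
    intro f hf k
    rw [Finset.sum_congr rfl fun i (_ : i ∈ univ) =>
      (by rw [← Finset.sum_mul, hf i] : ∑ j, f i j * XX i k = p i * XX i k)]
    rw [hP, ← filt_cum p k, Finset.sum_filter]
    refine Finset.sum_congr rfl fun i _ => ?_
    simp only [XX]
    by_cases h : (i : ℕ) ≤ (k : ℕ)
    · rw [if_pos h, if_pos (Fin.le_def.mpr h), mul_one]
    · rw [if_neg h, if_neg (fun hc => h (Fin.le_def.mp hc)), mul_zero]
  have hmargQ : ∀ f : Fin n → Fin n → ℝ, (∀ j, ∑ i, f i j = q j) → ∀ k : Fin n,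
      ∑ i, ∑ j, f i j * XX j k = Q ((k : ℕ) + 1) := by
    intro f hf k
    rw [Finset.sum_comm]
    rw [Finset.sum_congr rfl fun j (_ : j ∈ univ) =>
      (by rw [← Finset.sum_mul, hf j] : ∑ i, f i j * XX j k = q j * XX j k)]
    rw [hQ, ← filt_cum q k, Finset.sum_filter]
    refine Finset.sum_congr rfl fun j _ => ?_
    simp only [XX]
    by_cases h : (j : ℕ) ≤ (k : ℕ)
    · rw [if_pos h, if_pos (Fin.le_def.mpr h), mul_one]
    · rw [if_neg h, if_neg (fun hc => h (Fin.le_def.mp hc)), mul_zero]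
  -- cost decomposition
  have hsplit : ∀ f : Fin n → Fin n → ℝ,
      ∑ i, ∑ j, f i j * |((i : ℕ) : ℝ) - ((j : ℕ) : ℝ)|
        = ∑ k : Fin n, ∑ i, ∑ j, f i j * |XX i k - XX j k| := by
    intro f
    calc ∑ i, ∑ j, f i j * |((i : ℕ) : ℝ) - ((j : ℕ) : ℝ)|
        = ∑ i, ∑ j, ∑ k : Fin n, f i j * |XX i k - XX j k| :=
          Finset.sum_congr rfl fun i _ => Finset.sum_congr rfl fun j _ => by
            rw [dist_eq, Finset.mul_sum]
      _ = ∑ i, ∑ k : Fin n, ∑ j, f i j * |XX i k - XX j k| :=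
          Finset.sum_congr rfl fun i _ => Finset.sum_comm
      _ = ∑ k : Fin n, ∑ i, ∑ j, f i j * |XX i k - XX j k| := Finset.sum_comm
  -- lower bound
  have hlb : ∀ c ∈ {c | ∃ f, FeasibleFlow p q f ∧
      c = ∑ i, ∑ j, f i j * |((i : ℕ) : ℝ) - ((j : ℕ) : ℝ)|}, T ≤ c := by
    rintro c ⟨f, hf, rfl⟩
    rw [hsplit f, hT]
    refine Finset.sum_le_sum fun k _ => ?_
    have e1 : P ((k : ℕ) + 1) - Q ((k : ℕ) + 1) = ∑ i, ∑ j, f i j * (XX i k - XX j k) := by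
      simp only [mul_sub, Finset.sum_sub_distrib]
      rw [hmargP f hf.2.1 k, hmargQ f hf.2.2 k]
    calc |P ((k : ℕ) + 1) - Q ((k : ℕ) + 1)|
        = |∑ i, ∑ j, f i j * (XX i k - XX j k)| := by rw [e1]
      _ ≤ ∑ i, |∑ j, f i j * (XX i k - XX j k)| := Finset.abs_sum_le_sum_abs _ _
      _ ≤ ∑ i, ∑ j, |f i j * (XX i k - XX j k)| :=
          Finset.sum_le_sum fun i _ => Finset.abs_sum_le_sum_abs _ _
      _ = ∑ i, ∑ j, f i j * |XX i k - XX j k| :=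
          Finset.sum_congr rfl fun i _ => Finset.sum_congr rfl fun j _ => by
            rw [abs_mul, abs_of_nonneg (hf.1 i j)]
  -- cost of the coupling
  have hck : ∀ k : Fin n, ∑ i, ∑ j, F i j * (XX i k * XX j k)
      = min (P ((k : ℕ) + 1)) (Q ((k : ℕ) + 1)) := by
    intro k
    have step1 : ∀ i j : Fin n, F i j * (XX i k * XX j k)
        = if i ≤ k then (if j ≤ k then F i j else 0) else 0 := by
      intro i j
      simp only [XX, Fin.le_def]
      split_ifs <;> ring
    calc ∑ i, ∑ j, F i j * (XX i k * XX j k)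
        = ∑ i : Fin n, (if i ≤ k then (∑ j : Fin n, if j ≤ k then F i j else 0) else 0) := by
          refine Finset.sum_congr rfl fun i _ => ?_
          rw [Finset.sum_congr rfl fun j (_ : j ∈ univ) => step1 i j]
          split_ifs with h
          · rfl
          · simp
      _ = ∑ i ∈ univ.filter (fun i : Fin n => i ≤ k),
            ∑ j ∈ univ.filter (fun j : Fin n => j ≤ k), F i j := by
          rw [Finset.sum_filter]
          exact Finset.sum_congr rfl fun i _ => by rw [Finset.sum_filter]
      _ = ∑ i ∈ univ.filter (fun i : Fin n => i ≤ k),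
            ∑ j ∈ range ((k : ℕ) + 1),
              max 0 (min (P ((i : ℕ) + 1)) (Q (j + 1)) - max (P (i : ℕ)) (Q j)) :=
          Finset.sum_congr rfl fun i _ => filt_range
            (fun m => max 0 (min (P ((i : ℕ) + 1)) (Q (m + 1)) - max (P (i : ℕ)) (Q m))) k
      _ = ∑ i ∈ range ((k : ℕ) + 1), ∑ j ∈ range ((k : ℕ) + 1),
              max 0 (min (P (i + 1)) (Q (j + 1)) - max (P i) (Q j)) :=
          filt_range (fun m => ∑ j ∈ range ((k : ℕ) + 1),
            max 0 (min (P (m + 1)) (Q (j + 1)) - max (P m) (Q j))) k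
      _ = min (P ((k : ℕ) + 1)) (Q ((k : ℕ) + 1)) := ck_eq hp hq _
  have habs2 : ∀ a b c : ℕ, |XX a c - XX b c| = XX a c + XX b c - 2 * (XX a c * XX b c) := by
    intro a b c
    simp only [XX]
    split_ifs <;> norm_num
  have hcostF : ∑ i, ∑ j, F i j * |((i : ℕ) : ℝ) - ((j : ℕ) : ℝ)| = T := by
    rw [hsplit F, hT]
    refine Finset.sum_congr rfl fun k _ => ?_
    calc ∑ i, ∑ j, F i j * |XX i k - XX j k|
        = ∑ i, ∑ j, (F i j * XX i k + F i j * XX j k - 2 * (F i j * (XX i k * XX j k))) :=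
          Finset.sum_congr rfl fun i _ => Finset.sum_congr rfl fun j _ => by
            rw [habs2]; ring
      _ = (∑ i, ∑ j, F i j * XX i k) + (∑ i, ∑ j, F i j * XX j k)
            - 2 * ∑ i, ∑ j, F i j * (XX i k * XX j k) := by
          simp only [Finset.sum_sub_distrib, Finset.sum_add_distrib, Finset.mul_sum]
      _ = P ((k : ℕ) + 1) + Q ((k : ℕ) + 1)
            - 2 * min (P ((k : ℕ) + 1)) (Q ((k : ℕ) + 1)) := by
          rw [hmargP F hFfeas.2.1 k, hmargQ F hFfeas.2.2 k, hck k]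
      _ = |P ((k : ℕ) + 1) - Q ((k : ℕ) + 1)| := by
          rcases le_total (P ((k : ℕ) + 1)) (Q ((k : ℕ) + 1)) with h | h
          · rw [min_eq_left h, abs_of_nonpos (by linarith)]; ring
          · rw [min_eq_right h, abs_of_nonneg (by linarith)]; ring
  have hmem : T ∈ {c | ∃ f, FeasibleFlow p q f ∧
      c = ∑ i, ∑ j, f i j * |((i : ℕ) : ℝ) - ((j : ℕ) : ℝ)|} :=
    ⟨F, hFfeas, hcostF.symm⟩
  exact le_antisymm (csInf_le ⟨T, fun c hc => hlb c hc⟩ hmem) (le_csInf ⟨T, hmem⟩ hlb)
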